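/- (Unconditional K-theoretic content of Theorem 8.7, conjectured by Benini–Bonelli–Poggi–Tanzini) Let r ≥ 1 and k be integers, g := gcd(r,k). Let α_1, α_2, α_3 ∈ ℂ be nonzero, none of them a root of unity, with α_1α_2α_3 = exp(πik/r). For m ≥ 1 set A_m := (α_1α_2α_3)^{(1−r)m} · Σ_{j=0}^{r−1} (α_1α_2α_3)^{2jm}, B_m := (Π_{1≤i<j≤3} ((α_iα_j)^m − (α_iα_j)^{−m})) / (Π_{i=1}^{3} (α_i^m − α_i^{−m})), and G_m(q) := A_m · B_m · (−q^m)/(1 − (−1)^{km} q^m)² ∈ ℂ⟦q⟧. Then exp(Σ_{m≥1} (1/m)·G_m(q)) = Π_{n≥1} (1 − ((−1)^{kr} q^{r/g})^n)^{−gn} in ℂ⟦q⟧, both sides understood coefficientwise (for the coefficient of q^N only the finitely many m, n ≤ N contribute). -/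

import Mathlib

/-- `A_m = (α₁α₂α₃)^{(1−r)m} · Σ_{j=0}^{r−1} (α₁α₂α₃)^{2jm}`, the regularised form of
`[𝔱^{rm}]/[𝔱^m]` with `α₁α₂α₃ = 𝔱^{1/2}`. -/
noncomputable def Aterm (α : Fin 3 → ℂ) (r m : ℕ) : ℂ :=
  (α 0 * α 1 * α 2) ^ ((1 - (r : ℤ)) * m) *
    ∑ j ∈ Finset.range r, (α 0 * α 1 * α 2) ^ (2 * (j : ℤ) * m)

/-- `B_m = Π_{i<j}((αᵢαⱼ)^m − (αᵢαⱼ)^{−m}) / Π_i (αᵢ^m − αᵢ^{−m})`. -/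
noncomputable def Bterm (α : Fin 3 → ℂ) (m : ℕ) : ℂ :=
  (((α 0 * α 1) ^ (m : ℤ) - (α 0 * α 1) ^ (-(m : ℤ))) *
      ((α 0 * α 2) ^ (m : ℤ) - (α 0 * α 2) ^ (-(m : ℤ))) *
      ((α 1 * α 2) ^ (m : ℤ) - (α 1 * α 2) ^ (-(m : ℤ)))) /
    ((α 0 ^ (m : ℤ) - α 0 ^ (-(m : ℤ))) * (α 1 ^ (m : ℤ) - α 1 ^ (-(m : ℤ))) *
      (α 2 ^ (m : ℤ) - α 2 ^ (-(m : ℤ))))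

/-- `G_m(q) = A_m · B_m · (−q^m)/(1 − (−1)^{km} q^m)² ∈ ℂ⟦q⟧`. -/
noncomputable def Gser (α : Fin 3 → ℂ) (r : ℕ) (k : ℤ) (m : ℕ) : PowerSeries ℂ :=
  PowerSeries.C (Aterm α r m * Bterm α m) * (-(PowerSeries.X ^ m)) *
    ((1 - PowerSeries.C ((-1 : ℂ) ^ (k * m)) * PowerSeries.X ^ m)⁻¹) ^ 2

/-- The formal exponential of a power series with zero constant term. -/
noncomputable def psExp {K : Type*} [Field K] (g : PowerSeries K) : PowerSeries K :=
  PowerSeries.mk fun N =>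
    ∑ k ∈ Finset.range (N + 1), (Nat.factorial k : K)⁻¹ * PowerSeries.coeff N (g ^ k)

/-!
Put `t = α₁α₂α₃ = exp (πik/r)`, `g = gcd (r, k)`, `r' = r/g` and `ε = (-1)^{kr}`. Then
`t^{2m} = 1` exactly when `r' ∣ m`. For such `m` the relation `αᵢαⱼ = t/αₗ` turns each
numerator factor of `B_m` into `-t^m` times a denominator factor, so `B_m = -t^m` and
`A_m B_m = -r (-1)^{km}`; for the other `m` the geometric sum in `A_m` vanishes. Writing
`m = r'e` and `(-1)^{kr'} = ε`, the exponent becomes `∑_{e,d ≥ 1} (g d / e) (ε q^{r'})^{ed}`,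
and exchanging `d` and `e` turns it into `∑_n g n · (-log (1 - ε^n q^{r'n}))`.

The formal exponential is Mathlib's `exp` substituted at the series, so `u = psExp f` solves
`u' = f' u`; uniqueness for this equation gives `psExp (f + g) = psExp f · psExp g` and
`psExp (-log (1 - X)) = (1 - X)⁻¹`, which turns the last sum into the product.
-/

open PowerSeries Finset

theorem PowerSeries.coeff_pow_eq_zero_of_lt {R : Type*} [CommSemiring R] {f : R⟦X⟧}
    (hf : constantCoeff f = 0) {N d : ℕ} (h : N < d) : coeff N (f ^ d) = 0 :=
  coeff_of_lt_order N ((Nat.cast_lt.mpr h).trans_le (le_order_pow_of_constantCoeff_eq_zero d hf))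

theorem PowerSeries.constantCoeff_rescale {R : Type*} [CommSemiring R] (c : R) (f : R⟦X⟧) :
    constantCoeff (rescale c f) = constantCoeff f := by
  rw [← coeff_zero_eq_constantCoeff_apply, coeff_rescale, pow_zero, one_mul,
    coeff_zero_eq_constantCoeff_apply]

section FormalExp

variable {K : Type*} [Field K]

theorem constantCoeff_psExp (f : K⟦X⟧) : constantCoeff (psExp f) = 1 := by
  rw [← coeff_zero_eq_constantCoeff_apply]
  simp [psExp]

theorem coeff_psExp_congr {f g : K⟦X⟧} {N : ℕ} (h : trunc (N + 1) f = trunc (N + 1) g) :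
    coeff N (psExp f) = coeff N (psExp g) := by
  have hpow (d : ℕ) : coeff N (f ^ d) = coeff N (g ^ d) := by
    have := congrArg (Polynomial.coeff · N) (by rw [← trunc_trunc_pow, h, trunc_trunc_pow] :
      trunc (N + 1) (f ^ d) = trunc (N + 1) (g ^ d))
    simpa [coeff_trunc] using this
  simp [psExp, hpow]

variable [CharZero K]

theorem psExp_eq_subst_exp {f : K⟦X⟧} (hf : constantCoeff f = 0) :
    psExp f = (exp K).subst f := by
  ext N
  rw [coeff_subst' (HasSubst.of_constantCoeff_zero' hf),
    finsum_eq_sum_of_support_subset (s := range (N + 1))]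
  · simp [psExp, coeff_exp]
  · intro d hd
    contrapose! hd
    simp [coeff_pow_eq_zero_of_lt hf (by simpa using hd)]

theorem derivative_psExp {f : K⟦X⟧} (hf : constantCoeff f = 0) :
    d⁄dX K (psExp f) = psExp f * d⁄dX K f := by
  rw [psExp_eq_subst_exp hf, derivative_subst (HasSubst.of_constantCoeff_zero' hf),
    derivative_exp]

theorem eq_of_derivative_eq_mul {h u v : K⟦X⟧} (hu : d⁄dX K u = u * h)
    (hv : d⁄dX K v = v * h) (hu1 : constantCoeff u = 1) (hv1 : constantCoeff v = 1) : u = v := by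
  have hvv : v * v⁻¹ = 1 := PowerSeries.mul_inv_cancel v (by simp [hv1])
  have hq : u * v⁻¹ = 1 := by
    apply derivative.ext
    · rw [Derivation.leibniz, derivative_inv', hu, hv, smul_eq_mul, smul_eq_mul, derivative_one]
      linear_combination (-(u * h * v⁻¹)) * hvv
    · simp [hu1, hv1]
  linear_combination v * hq - u * hvv

theorem psExp_add {f g : K⟦X⟧} (hf : constantCoeff f = 0) (hg : constantCoeff g = 0) :
    psExp (f + g) = psExp f * psExp g := by
  refine eq_of_derivative_eq_mul (derivative_psExp (by simp [hf, hg])) ?_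
    (constantCoeff_psExp _) (by simp [constantCoeff_psExp])
  rw [Derivation.leibniz, derivative_psExp hf, derivative_psExp hg, map_add, smul_eq_mul,
    smul_eq_mul]
  ring

theorem psExp_zero : psExp (0 : K⟦X⟧) = 1 :=
  eq_of_derivative_eq_mul (h := 0) (by rw [derivative_psExp (map_zero _)]; simp) (by simp)
    (constantCoeff_psExp 0) (by simp)

theorem psExp_sum {ι : Type*} (s : Finset ι) {f : ι → K⟦X⟧}
    (hf : ∀ i ∈ s, constantCoeff (f i) = 0) :
    psExp (∑ i ∈ s, f i) = ∏ i ∈ s, psExp (f i) := by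
  induction s using Finset.cons_induction with
  | empty => simpa using psExp_zero
  | cons a s ha ih =>
    rw [Finset.forall_mem_cons] at hf
    rw [sum_cons, prod_cons, psExp_add hf.1 (by simp [map_sum, sum_eq_zero hf.2]), ih hf.2]

theorem psExp_nsmul {f : K⟦X⟧} (hf : constantCoeff f = 0) (n : ℕ) :
    psExp (n • f) = psExp f ^ n := by
  simpa using psExp_sum (range n) (f := fun _ => f) (fun _ _ => hf)

theorem psExp_expand {f : K⟦X⟧} (hf : constantCoeff f = 0) {j : ℕ} (hj : j ≠ 0) :
    psExp (expand j hj f) = expand j hj (psExp f) := by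
  rw [psExp_eq_subst_exp hf, psExp_eq_subst_exp (by simp [hf]), expand_apply, expand_apply,
    subst_comp_subst_apply (HasSubst.of_constantCoeff_zero' hf) (HasSubst.X_pow hj)]

theorem psExp_rescale {f : K⟦X⟧} (hf : constantCoeff f = 0) (c : K) :
    psExp (rescale c f) = rescale c (psExp f) := by
  rw [psExp_eq_subst_exp hf, psExp_eq_subst_exp (by rwa [constantCoeff_rescale]),
    rescale_eq_subst, rescale_eq_subst,
    subst_comp_subst_apply (HasSubst.of_constantCoeff_zero' hf) (HasSubst.smul_X' c)]

end FormalExp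

section LogSeries

variable {K : Type*} [Field K]

theorem PowerSeries.map_inv_of_constantCoeff_ne_zero {F : Type*} [FunLike F K⟦X⟧ K⟦X⟧]
    [RingHomClass F K⟦X⟧ K⟦X⟧] (φ : F) {f : K⟦X⟧} (hf : constantCoeff f ≠ 0) :
    φ f⁻¹ = (φ f)⁻¹ := by
  have h : φ f * φ f⁻¹ = 1 := by rw [← map_mul, PowerSeries.mul_inv_cancel f hf, map_one]
  have hc : constantCoeff (φ f) ≠ 0 :=
    left_ne_zero_of_mul_eq_one (by rw [← map_mul, h, map_one])
  rw [eq_inv_iff_mul_eq_one hc, mul_comm, h]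

theorem PowerSeries.expand_rescale_inv_one_sub_X (c : K) {j : ℕ} (hj : j ≠ 0) :
    expand j hj (rescale c (1 - X)⁻¹) = (1 - C c * X ^ j)⁻¹ := by
  rw [map_inv_of_constantCoeff_ne_zero _ (by simp),
    map_inv_of_constantCoeff_ne_zero _ (by simp)]
  simp [rescale_X, expand_C]

theorem PowerSeries.inv_one_sub_X : (1 - X : K⟦X⟧)⁻¹ = mk 1 := by
  rw [inv_eq_iff_mul_eq_one (by simp), mk_one_mul_one_sub_eq_one]

theorem PowerSeries.X_mul_inv_one_sub_X_sq :
    X * ((1 - X : K⟦X⟧)⁻¹) ^ 2 = mk fun n => (n : K) := by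
  ext n
  rw [inv_one_sub_X, mk_one_pow_eq_mk_choose_add]
  rcases n with _ | n
  · simp
  · simp [coeff_succ_X_mul, add_comm]

theorem coeff_C_mul_X_pow_mul_inv_one_sub_sq (c : K) {j : ℕ} (hj : j ≠ 0) (M : ℕ) :
    coeff M (C c * X ^ j * ((1 - C c * X ^ j)⁻¹) ^ 2) =
      if j ∣ M then ((M / j : ℕ) : K) * c ^ (M / j) else 0 := by
  have h : C c * X ^ j * ((1 - C c * X ^ j)⁻¹) ^ 2 =
      expand j hj (rescale c (X * ((1 - X : K⟦X⟧)⁻¹) ^ 2)) := by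
    rw [map_mul, map_mul, map_pow, map_pow, expand_rescale_inv_one_sub_X]
    simp [rescale_X, expand_C]
  rw [h, X_mul_inv_one_sub_X_sq, coeff_expand]
  split_ifs <;> simp [coeff_rescale, mul_comm]

/-- `-log (1 - c X ^ j) = ∑ₑ cᵉ X^{je} / e`; its constant coefficient is `0⁻¹ = 0`. -/
noncomputable def logInvOneSub (c : K) (j : ℕ) : K⟦X⟧ :=
  mk fun M => if j ∣ M then c ^ (M / j) * ((M / j : ℕ) : K)⁻¹ else 0

theorem constantCoeff_logInvOneSub (c : K) (j : ℕ) : constantCoeff (logInvOneSub c j) = 0 := by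
  rw [← coeff_zero_eq_constantCoeff_apply]
  simp [logInvOneSub]

theorem logInvOneSub_eq_expand_rescale (c : K) {j : ℕ} (hj : j ≠ 0) :
    logInvOneSub c j = expand j hj (rescale c (logInvOneSub 1 1)) := by
  ext M
  simp only [logInvOneSub, coeff_expand, coeff_rescale, coeff_mk, one_dvd, Nat.div_one, one_pow,
    one_mul]
  split_ifs <;> simp

variable [CharZero K]

theorem derivative_logInvOneSub_one_one : d⁄dX K (logInvOneSub (1 : K) 1) = (1 - X)⁻¹ := by
  ext n
  rw [inv_one_sub_X, coeff_derivative]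
  simp only [logInvOneSub, coeff_mk, one_dvd, if_true, Nat.div_one, one_pow, one_mul,
    Pi.one_apply]
  push_cast
  exact inv_mul_cancel₀ (Nat.cast_add_one_ne_zero n)

theorem psExp_logInvOneSub_one_one : psExp (logInvOneSub (1 : K) 1) = (1 - X)⁻¹ := by
  refine eq_of_derivative_eq_mul (h := (1 - X)⁻¹) ?_ ?_ (constantCoeff_psExp _) (by simp)
  · rw [derivative_psExp (constantCoeff_logInvOneSub 1 1), derivative_logInvOneSub_one_one]
  · rw [derivative_inv', map_sub, derivative_one, derivative_X]
    ring

theorem psExp_logInvOneSub (c : K) {j : ℕ} (hj : j ≠ 0) :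
    psExp (logInvOneSub c j) = (1 - C c * X ^ j)⁻¹ := by
  have hL := constantCoeff_logInvOneSub (1 : K) 1
  rw [logInvOneSub_eq_expand_rescale c hj, psExp_expand (by rwa [constantCoeff_rescale]),
    psExp_rescale hL, psExp_logInvOneSub_one_one, expand_rescale_inv_one_sub_X]

end LogSeries

theorem Int.dvd_mul_iff_div_gcd_dvd {r k m : ℤ} (hr : r ≠ 0) :
    r ∣ k * m ↔ r / r.gcd k ∣ m := by
  have hg : (r.gcd k : ℤ) ≠ 0 := by simp [Int.gcd_eq_zero_iff, hr]
  have hcop : IsCoprime (r / r.gcd k) (k / r.gcd k) :=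
    Int.isCoprime_iff_gcd_eq_one.mpr (Int.gcd_div_gcd_div_gcd (Int.gcd_pos_of_ne_zero_left k hr))
  have hr' := Int.ediv_mul_cancel (Int.gcd_dvd_left (a := r) (b := k))
  have hk' := Int.ediv_mul_cancel (Int.gcd_dvd_right (a := r) (b := k))
  calc r ∣ k * m ↔ r / r.gcd k * r.gcd k ∣ k / r.gcd k * m * r.gcd k := by
        rw [hr', mul_right_comm, hk']
    _ ↔ r / r.gcd k ∣ m := by
        rw [mul_dvd_mul_iff_right hg]
        exact ⟨hcop.dvd_of_dvd_mul_left, fun h => h.mul_left _⟩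

theorem Nat.div_gcd_dvd_iff {r m : ℕ} (hr : r ≠ 0) (k : ℤ) :
    r / Int.gcd r k ∣ m ↔ (r : ℤ) ∣ k * m := by
  rw [Int.dvd_mul_iff_div_gcd_dvd (by exact_mod_cast hr), ← Int.natCast_dvd_natCast]
  push_cast
  rfl

theorem Int.gcd_natCast_dvd (r : ℕ) (k : ℤ) : Int.gcd r k ∣ r := by
  exact_mod_cast Int.gcd_dvd_left (r : ℤ) k

theorem Nat.div_gcd_ne_zero {r : ℕ} (hr : r ≠ 0) (k : ℤ) : r / Int.gcd r k ≠ 0 :=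
  (Nat.div_pos (Nat.le_of_dvd (Nat.pos_of_ne_zero hr) (Int.gcd_natCast_dvd r k))
    (Int.gcd_pos_of_ne_zero_left k (by exact_mod_cast hr))).ne'

/-- `k r'` and `k r = k r' g` have the same parity, since `g` even forces `k` even. -/
theorem neg_one_zpow_mul_div_gcd_mul (r : ℕ) (k : ℤ) (n : ℕ) :
    (-1 : ℂ) ^ (k * ((r / Int.gcd r k * n : ℕ) : ℤ)) = ((-1) ^ (k * r)) ^ n := by
  have hgk : (Int.gcd r k : ℤ) ∣ k := Int.gcd_dvd_right _ _
  have hr : (r : ℤ) = Int.gcd r k * ((r / Int.gcd r k : ℕ) : ℤ) := by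
    exact_mod_cast (Nat.mul_div_cancel' (Int.gcd_natCast_dvd r k)).symm
  have hg : Even (Int.gcd r k : ℤ) → Even k := fun h =>
    even_iff_two_dvd.mpr (h.two_dvd.trans hgk)
  rw [Nat.cast_mul, ← mul_assoc, zpow_mul, zpow_natCast]
  congr 1
  conv_rhs => rw [hr]
  rw [neg_one_zpow_eq_ite, neg_one_zpow_eq_ite]
  simp only [Int.even_mul]
  exact if_congr (by tauto) rfl rfl

open Complex in
theorem exp_pi_mul_I_div_zpow_two_mul_eq_one_iff {r : ℕ} (hr : r ≠ 0) (k n : ℤ) :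
    exp (Real.pi * I * k / r) ^ (2 * n) = 1 ↔ (r : ℤ) ∣ k * n := by
  rw [← (isPrimitiveRoot_exp r hr).zpow_eq_one_iff_dvd, ← exp_int_mul, ← exp_int_mul]
  congr! 2
  push_cast
  field_simp

open Complex in
theorem exp_pi_mul_I_div_zpow_self {r : ℕ} (hr : r ≠ 0) (k : ℤ) :
    exp (Real.pi * I * k / r) ^ (r : ℤ) = (-1) ^ k := by
  rw [← exp_int_mul, ← exp_pi_mul_I, ← exp_int_mul]
  congr 1
  push_cast
  field_simp

theorem geom_sum_eq_ite_of_pow_eq_one {K : Type*} [Field K] [DecidableEq K] {x : K} {r : ℕ}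
    (hx : x ^ r = 1) : ∑ j ∈ range r, x ^ j = if x = 1 then (r : K) else 0 := by
  split_ifs with h
  · simp [h]
  · rw [geom_sum_eq h, hx, sub_self, zero_div]

theorem Aterm_eq {r : ℕ} (hr : r ≠ 0) {k : ℤ} {α : Fin 3 → ℂ}
    (hprod : α 0 * α 1 * α 2 = Complex.exp ((Real.pi : ℂ) * Complex.I * k / r)) (m : ℕ) :
    Aterm α r m = (α 0 * α 1 * α 2) ^ ((1 - (r : ℤ)) * m) *
      if (r : ℤ) ∣ k * m then (r : ℂ) else 0 := by
  unfold Aterm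
  congr 1
  have hsum (j : ℕ) : (α 0 * α 1 * α 2) ^ (2 * (j : ℤ) * m) =
      ((α 0 * α 1 * α 2) ^ (2 * (m : ℤ))) ^ j := by
    rw [← zpow_natCast, ← zpow_mul]
    ring_nf
  have hpow : ((α 0 * α 1 * α 2) ^ (2 * (m : ℤ))) ^ r = 1 := by
    rw [← zpow_natCast, ← zpow_mul, hprod, mul_assoc (2 : ℤ),
      exp_pi_mul_I_div_zpow_two_mul_eq_one_iff hr]
    exact ⟨k * m, by ring⟩
  simp only [hsum]
  rw [geom_sum_eq_ite_of_pow_eq_one hpow]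
  exact if_congr (by rw [hprod, exp_pi_mul_I_div_zpow_two_mul_eq_one_iff hr]) rfl rfl

theorem mul_sub_inv_eq_of_sq_eq_one {K : Type*} [Field K] {x y z : K} (hx : x ≠ 0) (hy : y ≠ 0)
    (hz : z ≠ 0) (h : (x * y * z) ^ 2 = 1) :
    x * y - (x * y)⁻¹ = -(x * y * z) * (z - z⁻¹) := by
  field_simp
  linear_combination h

theorem sub_inv_prod_div_eq_of_sq_eq_one {K : Type*} [Field K] {a b c : K} (ha : a ≠ 0)
    (hb : b ≠ 0) (hc : c ≠ 0) (hd : (a - a⁻¹) * (b - b⁻¹) * (c - c⁻¹) ≠ 0)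
    (h : (a * b * c) ^ 2 = 1) :
    (a * b - (a * b)⁻¹) * (a * c - (a * c)⁻¹) * (b * c - (b * c)⁻¹) /
      ((a - a⁻¹) * (b - b⁻¹) * (c - c⁻¹)) = -(a * b * c) := by
  rw [mul_sub_inv_eq_of_sq_eq_one ha hb hc h,
    mul_sub_inv_eq_of_sq_eq_one ha hc hb (by linear_combination h),
    mul_sub_inv_eq_of_sq_eq_one hb hc ha (by linear_combination h), div_eq_iff hd]
  linear_combination (-(a * b * c) * (a - a⁻¹) * (b - b⁻¹) * (c - c⁻¹)) * h

theorem Bterm_eq_neg {α : Fin 3 → ℂ} {m : ℕ} (hα : ∀ i, α i ≠ 0)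
    (hα' : ∀ i, α i ^ (2 * m) ≠ 1) (ht : (α 0 * α 1 * α 2) ^ (2 * m) = 1) :
    Bterm α m = -(α 0 * α 1 * α 2) ^ m := by
  have hden (i : Fin 3) : α i ^ m - (α i ^ m)⁻¹ ≠ 0 := by
    rw [sub_ne_zero]
    intro h
    apply hα' i
    rw [pow_mul', sq]
    nth_rewrite 2 [h]
    exact mul_inv_cancel₀ (pow_ne_zero m (hα i))
  unfold Bterm
  simp only [zpow_neg, zpow_natCast, mul_pow]
  exact sub_inv_prod_div_eq_of_sq_eq_one (pow_ne_zero m (hα 0)) (pow_ne_zero m (hα 1))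
    (pow_ne_zero m (hα 2)) (mul_ne_zero (mul_ne_zero (hden 0) (hden 1)) (hden 2))
    (by rw [← mul_pow, ← mul_pow, ← pow_mul', ht])

theorem Aterm_mul_Bterm {r : ℕ} (hr : r ≠ 0) {k : ℤ} {α : Fin 3 → ℂ}
    (hprod : α 0 * α 1 * α 2 = Complex.exp ((Real.pi : ℂ) * Complex.I * k / r))
    (hα : ∀ i, α i ≠ 0) (hαru : ∀ i, ∀ m : ℕ, m ≠ 0 → α i ^ m ≠ 1) {m : ℕ}
    (hm : m ≠ 0) :
    Aterm α r m * Bterm α m = if (r : ℤ) ∣ k * m then -(r : ℂ) * (-1) ^ (k * m) else 0 := by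
  rw [Aterm_eq hr hprod]
  split_ifs with h
  · have htz : (α 0 * α 1 * α 2) ^ (2 * (m : ℤ)) = 1 := by
      rwa [hprod, exp_pi_mul_I_div_zpow_two_mul_eq_one_iff hr]
    have hphase : (α 0 * α 1 * α 2) ^ ((1 - (r : ℤ)) * m) * (α 0 * α 1 * α 2) ^ m =
        (-1) ^ (k * m) := by
      have ht0 : α 0 * α 1 * α 2 ≠ 0 := by rw [hprod]; exact Complex.exp_ne_zero _
      -- `t^{(1-r)m} t^m = t^{2m} (t^r)^{-m} = ((-1)^k)^{-m}`
      rw [← zpow_natCast _ m, ← zpow_add₀ ht0,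
        show (1 - (r : ℤ)) * m + m = 2 * m + r * (-m) by ring, zpow_add₀ ht0,
        zpow_mul _ (r : ℤ), htz, one_mul, hprod,
        exp_pi_mul_I_div_zpow_self hr, ← zpow_mul, mul_neg, ← inv_zpow', inv_neg_one]
    rw [Bterm_eq_neg hα (fun i => hαru i (2 * m) (by omega)) (by exact_mod_cast htz)]
    linear_combination (-(r : ℂ)) * hphase
  · simp

theorem coeff_Gser {r : ℕ} (hr : r ≠ 0) {k : ℤ} {α : Fin 3 → ℂ}
    (hprod : α 0 * α 1 * α 2 = Complex.exp ((Real.pi : ℂ) * Complex.I * k / r))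
    (hα : ∀ i, α i ≠ 0) (hαru : ∀ i, ∀ m : ℕ, m ≠ 0 → α i ^ m ≠ 1) {m : ℕ}
    (hm : m ≠ 0) (M : ℕ) :
    coeff M (Gser α r k m) =
      if r / Int.gcd r k ∣ m ∧ m ∣ M then (r : ℂ) * (M / m : ℕ) * (-1) ^ (k * M)
      else 0 := by
  unfold Gser
  rw [Aterm_mul_Bterm hr hprod hα hαru hm]
  by_cases h : r / Int.gcd r k ∣ m
  · rw [if_pos ((Nat.div_gcd_dvd_iff hr k).mp h)]
    set c : ℂ := (-1) ^ (k * m)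
    have hG : C (-(r : ℂ) * c) * -X ^ m * ((1 - C c * X ^ m)⁻¹) ^ 2 =
        C (r : ℂ) * (C c * X ^ m * ((1 - C c * X ^ m)⁻¹) ^ 2) := by
      simp only [map_mul, map_neg]
      ring
    rw [hG, coeff_C_mul, coeff_C_mul_X_pow_mul_inv_one_sub_sq c hm]
    by_cases hM : m ∣ M
    · obtain ⟨d, rfl⟩ := hM
      simp only [h, dvd_mul_right, and_self, if_true,
        Nat.mul_div_cancel_left d (Nat.pos_of_ne_zero hm), c]
      rw [← zpow_natCast, ← zpow_mul]
      push_cast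
      ring_nf
    · simp [hM]
  · simp [h, mt (Nat.div_gcd_dvd_iff hr k).mpr h]

theorem Nat.sum_Icc_ite_dvd {β : Type*} [AddCommMonoid β] {n N : ℕ} (hn : n ≠ 0)
    (hN : n ≤ N) (f : ℕ → β) :
    ∑ d ∈ Icc 1 N, (if d ∣ n then f d else 0) = ∑ d ∈ n.divisors, f d := by
  rw [← sum_filter]
  congr 1
  ext d
  simp only [mem_filter, mem_Icc, Nat.mem_divisors]
  constructor
  · rintro ⟨-, hd⟩
    exact ⟨hd, hn⟩
  · rintro ⟨hd, -⟩
    have hd' := Nat.le_of_dvd (Nat.pos_of_ne_zero hn) hd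
    exact ⟨⟨Nat.pos_of_dvd_of_pos hd (Nat.pos_of_ne_zero hn), hd'.trans hN⟩, hd⟩

theorem Nat.sum_Icc_ite_dvd_mul {β : Type*} [AddCommMonoid β] {j : ℕ} (hj : j ≠ 0) (n : ℕ)
    (f : ℕ → β) :
    ∑ m ∈ Icc 1 (j * n), (if j ∣ m ∧ m ∣ j * n then f m else 0) =
      ∑ d ∈ n.divisors, f (j * d) := by
  rw [← sum_filter,
    ← sum_image fun a _ b _ h => Nat.eq_of_mul_eq_mul_left (Nat.pos_of_ne_zero hj) h]
  congr 1
  ext m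
  simp only [mem_filter, mem_Icc, mem_image, Nat.mem_divisors]
  constructor
  · rintro ⟨⟨hm, hmn⟩, ⟨d, rfl⟩, hdn⟩
    refine ⟨d, ⟨(Nat.mul_dvd_mul_iff_left (Nat.pos_of_ne_zero hj)).mp hdn, ?_⟩, rfl⟩
    rintro rfl
    rw [mul_zero] at hmn
    omega
  · rintro ⟨d, ⟨hd, hn⟩, rfl⟩
    have hpos : 0 < j * n := Nat.mul_pos (Nat.pos_of_ne_zero hj) (Nat.pos_of_ne_zero hn)
    have hdvd : j * d ∣ j * n := Nat.mul_dvd_mul_left j hd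
    exact ⟨⟨Nat.pos_of_dvd_of_pos hdvd hpos, Nat.le_of_dvd hpos hdvd⟩, dvd_mul_right j d,
      hdvd⟩

theorem sum_inv_mul_coeff_Gser {r : ℕ} (hr : r ≠ 0) {k : ℤ} {α : Fin 3 → ℂ}
    (hprod : α 0 * α 1 * α 2 = Complex.exp ((Real.pi : ℂ) * Complex.I * k / r))
    (hα : ∀ i, α i ≠ 0) (hαru : ∀ i, ∀ m : ℕ, m ≠ 0 → α i ^ m ≠ 1) (M : ℕ) :
    ∑ m ∈ Icc 1 M, (m : ℂ)⁻¹ * coeff M (Gser α r k m) =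
      if r / Int.gcd r k ∣ M then
        Int.gcd r k * ((-1 : ℂ) ^ (k * r)) ^ (M / (r / Int.gcd r k)) *
          ∑ d ∈ (M / (r / Int.gcd r k)).divisors,
            ((M / (r / Int.gcd r k) / d : ℕ) : ℂ) * (d : ℂ)⁻¹
      else 0 := by
  set g := Int.gcd r k
  set r' := r / g
  have hg : g * r' = r := Nat.mul_div_cancel' (Int.gcd_natCast_dvd r k)
  have hr' : r' ≠ 0 := Nat.div_gcd_ne_zero hr k
  rw [sum_congr rfl fun m hm => by
    rw [coeff_Gser hr hprod hα hαru (by simp at hm; omega), mul_ite, mul_zero]]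
  split_ifs with hM
  · obtain ⟨M', rfl⟩ := hM
    rw [Nat.sum_Icc_ite_dvd_mul hr', Nat.mul_div_cancel_left _ (Nat.pos_of_ne_zero hr'), mul_sum]
    refine sum_congr rfl fun d hd => ?_
    have hd0 : d ≠ 0 := Nat.ne_of_gt (Nat.pos_of_mem_divisors hd)
    rw [Nat.mul_div_mul_left _ _ (Nat.pos_of_ne_zero hr'), neg_one_zpow_mul_div_gcd_mul, ← hg]
    push_cast
    field_simp
  · refine sum_eq_zero fun m _ => if_neg fun h => hM (h.1.trans h.2)

theorem coeff_sum_nsmul_logInvOneSub {K : Type*} [Field K] (c : K) (g : ℕ) {j : ℕ}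
    (hj : j ≠ 0) {M N : ℕ} (hMN : M ≤ N) :
    coeff M (∑ n ∈ Icc 1 N, (g * n) • logInvOneSub (c ^ n) (j * n)) =
      if j ∣ M then
        g * c ^ (M / j) * ∑ d ∈ (M / j).divisors, (d : K) * ((M / j / d : ℕ) : K)⁻¹
      else 0 := by
  simp only [map_sum, map_nsmul, logInvOneSub, coeff_mk, smul_ite, smul_zero]
  split_ifs with hM
  · obtain ⟨M', rfl⟩ := hM
    rw [Nat.mul_div_cancel_left _ (Nat.pos_of_ne_zero hj)]
    rcases eq_or_ne M' 0 with rfl | hM'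
    · simp
    simp only [Nat.mul_dvd_mul_iff_left (Nat.pos_of_ne_zero hj)]
    rw [Nat.sum_Icc_ite_dvd hM' (le_trans (Nat.le_mul_of_pos_left M' (Nat.pos_of_ne_zero hj)) hMN),
      mul_sum]
    refine sum_congr rfl fun d hd => ?_
    rw [Nat.mul_div_mul_left _ _ (Nat.pos_of_ne_zero hj), ← pow_mul,
      Nat.mul_div_cancel' (Nat.dvd_of_mem_divisors hd), nsmul_eq_mul]
    push_cast
    ring
  · exact sum_eq_zero fun n _ => if_neg fun h => hM ((dvd_mul_right j n).trans h)

theorem trunc_mk_sum_Gser_eq_sum_logInvOneSub {r : ℕ} (hr : r ≠ 0) {k : ℤ} {α : Fin 3 → ℂ}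
    (hprod : α 0 * α 1 * α 2 = Complex.exp ((Real.pi : ℂ) * Complex.I * k / r))
    (hα : ∀ i, α i ≠ 0) (hαru : ∀ i, ∀ m : ℕ, m ≠ 0 → α i ^ m ≠ 1) (N : ℕ) :
    trunc (N + 1) (mk fun M => ∑ m ∈ Icc 1 M, (m : ℂ)⁻¹ * coeff M (Gser α r k m)) =
      trunc (N + 1) (∑ n ∈ Icc 1 N, (Int.gcd r k * n) •
        logInvOneSub (((-1 : ℂ) ^ (k * r)) ^ n) (r / Int.gcd r k * n)) := by
  ext M
  simp only [coeff_trunc]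
  split_ifs with hM
  · rw [coeff_mk, sum_inv_mul_coeff_Gser hr hprod hα hαru,
      coeff_sum_nsmul_logInvOneSub _ _ (Nat.div_gcd_ne_zero hr k) (Nat.lt_succ_iff.mp hM)]
    congr 2
    rw [← Nat.sum_div_divisors]
    exact sum_congr rfl fun d hd => by
      rw [Nat.div_div_self (Nat.dvd_of_mem_divisors hd) (Nat.mem_divisors.mp hd).2]
  · rfl

theorem BBPT_subtorus_macmahon_general (r : ℕ) (hr : 1 ≤ r) (k : ℤ) (α : Fin 3 → ℂ)
    (hαru : ∀ i, ∀ m : ℕ, m ≠ 0 → α i ^ m ≠ 1)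
    (hprod : α 0 * α 1 * α 2 = Complex.exp ((Real.pi : ℂ) * Complex.I * k / r)) (N : ℕ) :
    PowerSeries.coeff N
        (psExp (PowerSeries.mk fun M =>
          ∑ m ∈ Finset.Icc 1 M, (m : ℂ)⁻¹ * PowerSeries.coeff M (Gser α r k m)))
      = PowerSeries.coeff N
          (∏ n ∈ Finset.Icc 1 N,
            ((1 - (PowerSeries.C ((-1 : ℂ) ^ (k * (r : ℤ))) *
                PowerSeries.X ^ (r / Int.gcd (r : ℤ) k)) ^ n)⁻¹) ^ (Int.gcd (r : ℤ) k * n)) := by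
  have hr0 : r ≠ 0 := by omega
  have hα : ∀ i, α i ≠ 0 := by
    have h : α 0 * α 1 * α 2 ≠ 0 := hprod ▸ Complex.exp_ne_zero _
    simp only [ne_eq, mul_eq_zero, not_or] at h
    exact fun i => by fin_cases i <;> simp [h]
  rw [coeff_psExp_congr (trunc_mk_sum_Gser_eq_sum_logInvOneSub hr0 hprod hα hαru N),
    psExp_sum _ fun n _ => by rw [map_nsmul, constantCoeff_logInvOneSub, smul_zero]]
  refine congrArg _ (prod_congr rfl fun n hn => ?_)
  rw [psExp_nsmul (constantCoeff_logInvOneSub _ _),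
    psExp_logInvOneSub _ (mul_ne_zero (Nat.div_gcd_ne_zero hr0 k) (by simp at hn; omega)),
    mul_pow, ← map_pow, ← pow_mul]

/-- **(Unconditional K-theoretic content of Theorem 8.7; conjecture of
Benini–Bonelli–Poggi–Tanzini.)** Let `r ≥ 1`, `k ∈ ℤ`, `g = gcd(r,k)`, and let `α₁,α₂,α₃` be
nonzero complex numbers, none a root of unity, with `α₁α₂α₃ = exp(πik/r)`. Then
`exp(Σ_{m≥1}(1/m)·G_m(q)) = Π_{n≥1}(1 − ((−1)^{kr} q^{r/g})^n)^{−gn}` in `ℂ⟦q⟧`,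
coefficientwise: for the coefficient of `q^N` only `m, n ≤ N` contribute. -/
theorem BBPT_subtorus_macmahon (r : ℕ) (hr : 1 ≤ r) (k : ℤ) (α : Fin 3 → ℂ)
    (hα0 : ∀ i, α i ≠ 0) (hαru : ∀ i, ∀ m : ℕ, m ≠ 0 → α i ^ m ≠ 1)
    (hprod : α 0 * α 1 * α 2 = Complex.exp ((Real.pi : ℂ) * Complex.I * k / r)) (N : ℕ) :
    PowerSeries.coeff N
        (psExp (PowerSeries.mk fun M =>
          ∑ m ∈ Finset.Icc 1 M, (m : ℂ)⁻¹ * PowerSeries.coeff M (Gser α r k m)))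
      = PowerSeries.coeff N
          (∏ n ∈ Finset.Icc 1 N,
            ((1 - (PowerSeries.C ((-1 : ℂ) ^ (k * (r : ℤ))) *
                PowerSeries.X ^ (r / Int.gcd (r : ℤ) k)) ^ n)⁻¹) ^ (Int.gcd (r : ℤ) k * n)) :=
  BBPT_subtorus_macmahon_general r hr k α hαru hprod N
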